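/- Let I be a nonempty index set and let Σ be a finite-dimensional subcomplex of Σ(I) such that |Σ| is path-connected. Then the intrinsic metric d_i on |Σ| is finite, and d_i and the ℓ₂-metric induce the same topology on |Σ|. -/

import Mathlib

open Set Metric Filter MeasureTheory
open scoped ENNReal NNReal

noncomputable section

/-- The real Hilbert space `ℓ₂(I)`. -/
abbrev L2 (I : Type*) := lp (fun _ : I => ℝ) 2

/-- The standard unit vector `e_i ∈ ℓ₂(I)`. -/
noncomputable def stdVec {I : Type*} (i : I) : L2 I :=
  letI := Classical.decEq I; lp.single 2 i 1

/-- The (closed) face of the full complex `Σ(I)` spanned by the vertices `e_i`, `i ∈ s`: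
the convex hull of the corresponding standard unit vectors. -/
def faceSet {I : Type*} (s : Finset I) : Set (L2 I) := convexHull ℝ (stdVec '' (s : Set I))

/-- `x` lies in the relative interior of the face spanned by `s`. -/
def memRelInt {I : Type*} (s : Finset I) (x : L2 I) : Prop :=
  x ∈ faceSet s ∧ ∀ i ∈ s, 0 < x i

/-- A subcomplex of the full complex `Σ(I)`, encoded by the collection of the vertex sets of
its faces: a nonempty collection of finite nonempty subsets of `I`, closed under passing to
nonempty subsets. -/
structure IsSubcomplex {I : Type*} (F : Set (Finset I)) : Prop where
  nonempty : F.Nonempty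
  faces_nonempty : ∀ s ∈ F, s.Nonempty
  down_closed : ∀ s ∈ F, ∀ t : Finset I, t.Nonempty → t ⊆ s → t ∈ F

/-- The underlying set `|Σ| ⊆ ℓ₂(I)` of a (sub)complex: the union of its faces. -/
def cpxCarrier {I : Type*} (F : Set (Finset I)) : Set (L2 I) := ⋃ s ∈ F, faceSet s

/-- The open star of the face with vertex set `s` in the complex `F`: the union of the
relative interiors of all faces of `F` containing it. -/
def openStar {I : Type*} (F : Set (Finset I)) (s : Finset I) : Set (L2 I) :=
  ⋃ t ∈ F, ⋃ (_ : s ⊆ t), {x | memRelInt t x}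

/-- The smallest subcomplex of `F` whose underlying set contains `A`
(encoded by its collection of faces). -/
def hullFaces {I : Type*} (F : Set (Finset I)) (A : Set (L2 I)) : Set (Finset I) :=
  ⋂₀ {G : Set (Finset I) | G ⊆ F ∧ IsSubcomplex G ∧ A ⊆ cpxCarrier G}

/-- The pointwise (lower) Lipschitz constant at `x` of the restriction of `f` to `S`:
`liminf_{s → 0+} s⁻¹ · sup { d(f x, f y) : y ∈ S, d(x,y) < s }`, valued in `ℝ≥0∞`. -/
noncomputable def lipWithin {X Y : Type*} [PseudoMetricSpace X] [PseudoMetricSpace Y]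
    (f : X → Y) (S : Set X) (x : X) : ℝ≥0∞ :=
  Filter.liminf
    (fun s : ℝ => (⨆ y ∈ S ∩ Metric.ball x s, edist (f x) (f y)) / ENNReal.ofReal s)
    (nhdsWithin 0 (Set.Ioi 0))

/-- The pointwise (lower) Lipschitz constant `lip f (x)`, valued in `ℝ≥0∞`. -/
noncomputable def plip {X Y : Type*} [PseudoMetricSpace X] [PseudoMetricSpace Y]
    (f : X → Y) (x : X) : ℝ≥0∞ := lipWithin f Set.univ x

/-- A subset `S` of a metric space is `c`-quasiconvex: any two of its points are joined by a
continuous curve in `S` of length (total variation) at most `c` times their distance. -/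
def QuasiconvexSet {X : Type*} [PseudoMetricSpace X] (S : Set X) (c : ℝ) : Prop :=
  ∀ x ∈ S, ∀ y ∈ S, ∃ γ : ℝ → X, ContinuousOn γ (Set.Icc 0 1) ∧
    Set.MapsTo γ (Set.Icc 0 1) S ∧ γ 0 = x ∧ γ 1 = y ∧
    eVariationOn γ (Set.Icc 0 1) ≤ ENNReal.ofReal (c * dist x y)

/-- The intrinsic (length) metric of `S`: the infimal length of continuous curves in `S`
joining `x` and `y`, valued in `ℝ≥0∞` (with `inf ∅ = ∞`). -/
noncomputable def intrinsicDist {X : Type*} [PseudoMetricSpace X] (S : Set X) (x y : X) : ℝ≥0∞ :=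
  ⨅ (γ : ℝ → X) (_ : ContinuousOn γ (Set.Icc 0 1) ∧ Set.MapsTo γ (Set.Icc 0 1) S ∧
      γ 0 = x ∧ γ 1 = y),
    eVariationOn γ (Set.Icc 0 1)

/-- `X` has Nagata dimension `≤ n` with constant `c`: for every `s > 0` there is a covering of
`X` by sets of diameter `≤ c·s` such that every set of diameter `≤ s` meets at most `n + 1`
members of the covering. -/
def NagataDimLE (X : Type*) [PseudoMetricSpace X] (n : ℕ) (c : ℝ) : Prop :=
  ∀ s : ℝ, 0 < s → ∃ B : Set (Set X),
    (∀ x : X, ∃ b ∈ B, x ∈ b) ∧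
    (∀ b ∈ B, EMetric.diam b ≤ ENNReal.ofReal (c * s)) ∧
    (∀ A : Set X, EMetric.diam A ≤ ENNReal.ofReal s →
      {b | b ∈ B ∧ (b ∩ A).Nonempty}.encard ≤ (n : ℕ∞) + 1)

/-- `Y` is Lipschitz `k`-connected with constant `lam`: for `0 ≤ m ≤ k`, every `L`-Lipschitz map
from the unit sphere `S^m ⊆ ℝ^{m+1}` to `Y` extends to a `lam·L`-Lipschitz map on the closed
unit ball `B^{m+1}`. -/
def LipschitzConnectedWith (Y : Type*) [PseudoMetricSpace Y] (k : ℕ) (lam : ℝ) : Prop :=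
  ∀ m : ℕ, m ≤ k → ∀ L : ℝ, 0 < L →
    ∀ f : EuclideanSpace ℝ (Fin (m + 1)) → Y,
      LipschitzOnWith (Real.toNNReal L) f (Metric.sphere 0 1) →
      ∃ g : EuclideanSpace ℝ (Fin (m + 1)) → Y,
        LipschitzOnWith (Real.toNNReal (lam * L)) g (Metric.closedBall 0 1) ∧
        Set.EqOn f g (Metric.sphere 0 1)

end

/-!
If `x ∈ |Σ|`, every point `y ∈ |Σ|` close enough to `x` has all vertices of the support of `x` in
its own support, so `x` lies in the face carrying `y` and the segment `[x, y]` stays in `|Σ|`.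
Hence `d_i(x, y) = ‖x - y‖` for such `y`, while `‖x - y‖ ≤ d_i(x, y)` always. In particular
"`d_i(x, y) < ∞`" is a transitive relation that holds locally, so it holds on all of the
connected set `|Σ|`.
-/

open Topology

section Faces

variable {I : Type*}

lemma stdVec_apply [DecidableEq I] (i j : I) : stdVec i j = if j = i then 1 else 0 := by
  simp only [stdVec, lp.single_apply, Pi.single_apply]
  congr

lemma continuous_L2_apply (i : I) : Continuous fun x : L2 I => x i :=
  (continuous_apply i).comp lp.uniformContinuous_coe.continuous

lemma mem_faceSet_iff {s : Finset I} {x : L2 I} :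
    x ∈ faceSet s ↔ (∀ i, 0 ≤ x i) ∧ (∀ i ∉ s, x i = 0) ∧ ∑ i ∈ s, x i = 1 := by
  classical
  constructor
  · suffices faceSet s ⊆ {y : L2 I | (∀ i, 0 ≤ y i) ∧ (∀ i ∉ s, y i = 0) ∧ ∑ i ∈ s, y i = 1} from
      (this ·)
    refine convexHull_min ?_ ?_
    · rintro _ ⟨i, hi, rfl⟩
      refine ⟨fun j => ?_, fun j hj => ?_, ?_⟩
      · rw [stdVec_apply]; split_ifs <;> norm_num
      · rw [stdVec_apply, if_neg (ne_of_mem_of_not_mem hi hj).symm]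
      · simp_rw [stdVec_apply, Finset.sum_ite_eq', if_pos (Finset.mem_coe.1 hi)]
    · rintro y ⟨hy0, hys, hy1⟩ z ⟨hz0, hzs, hz1⟩ a b ha hb hab
      simp only [Set.mem_ofPred_eq, lp.coeFn_add, lp.coeFn_smul, Pi.add_apply, Pi.smul_apply,
        smul_eq_mul]
      refine ⟨fun i => add_nonneg (mul_nonneg ha (hy0 i)) (mul_nonneg hb (hz0 i)),
        fun i hi => by simp [hys i hi, hzs i hi], ?_⟩
      rw [Finset.sum_add_distrib, ← Finset.mul_sum, ← Finset.mul_sum, hy1, hz1, mul_one, mul_one,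
        hab]
  · rintro ⟨h0, hs, h1⟩
    have hx : x = ∑ i ∈ s, x i • stdVec i := by
      ext j
      simp only [lp.coeFn_sum, Finset.sum_apply, lp.coeFn_smul, Pi.smul_apply, smul_eq_mul,
        stdVec_apply, mul_ite, mul_one, mul_zero, Finset.sum_ite_eq]
      split_ifs with hj
      · rfl
      · exact hs j hj
    rw [hx, ← Finset.centerMass_eq_of_sum_1 s stdVec h1]
    exact Finset.centerMass_mem_convexHull s (fun i _ => h0 i) (h1 ▸ one_pos)
      (fun i hi => Set.mem_image_of_mem _ hi)

lemma mem_faceSet_of_support_subset {s t : Finset I} {x : L2 I} (hx : x ∈ faceSet s)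
    (hst : ∀ i ∈ s, x i ≠ 0 → i ∈ t) : x ∈ faceSet t := by
  obtain ⟨h0, hs, h1⟩ := mem_faceSet_iff.1 hx
  have ht : ∀ i ∉ t, x i = 0 := fun i hit => by
    by_cases his : i ∈ s
    · exact not_imp_comm.1 (hst i his) hit
    · exact hs i his
  classical
  refine mem_faceSet_iff.2 ⟨h0, ht, ?_⟩
  calc ∑ i ∈ t, x i = ∑ i ∈ s ∪ t, x i :=
        Finset.sum_subset Finset.subset_union_right fun i _ hi => ht i hi
    _ = ∑ i ∈ s, x i := (Finset.sum_subset Finset.subset_union_left fun i _ hi => hs i hi).symm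
    _ = 1 := h1

lemma eventually_segment_subset_cpxCarrier {F : Set (Finset I)} {x : L2 I}
    (hx : x ∈ cpxCarrier F) : ∀ᶠ y in 𝓝[cpxCarrier F] x, segment ℝ x y ⊆ cpxCarrier F := by
  obtain ⟨s, hsF, hxs⟩ := Set.mem_iUnion₂.1 hx
  have hsupp : ∀ᶠ y in 𝓝 x, ∀ i ∈ s, x i ≠ 0 → y i ≠ 0 := by
    refine (s.eventually_all).2 fun i _ => ?_
    by_cases hxi : x i = 0
    · exact Eventually.of_forall fun _ h => absurd hxi h
    · exact ((continuous_L2_apply i).continuousAt.eventually_ne hxi).mono fun _ h _ => h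
  filter_upwards [nhdsWithin_le_nhds hsupp, self_mem_nhdsWithin] with y hy hyF
  obtain ⟨t, htF, hyt⟩ := Set.mem_iUnion₂.1 hyF
  have hxt : x ∈ faceSet t := mem_faceSet_of_support_subset hxs fun i hi hxi =>
    by_contra fun hit => hy i hi hxi ((mem_faceSet_iff.1 hyt).2.1 i hit)
  exact ((convex_convexHull ℝ _).segment_subset hxt hyt).trans
    (Set.subset_biUnion_of_mem (u := faceSet) htF)

end Faces

section IntrinsicDist

variable {X : Type*} [PseudoMetricSpace X] {S : Set X} {x y z : X}

lemma intrinsicDist_le_eVariationOn {γ : ℝ → X} (hγ : ContinuousOn γ (Icc 0 1))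
    (hγS : MapsTo γ (Icc 0 1) S) (h0 : γ 0 = x) (h1 : γ 1 = y) :
    intrinsicDist S x y ≤ eVariationOn γ (Icc 0 1) :=
  iInf₂_le γ ⟨hγ, hγS, h0, h1⟩

lemma intrinsicDist_le_eVariationOn_Icc {γ : ℝ → X} {a b : ℝ} (hab : a < b)
    (hγ : ContinuousOn γ (Icc a b)) (hγS : MapsTo γ (Icc a b) S) (ha : γ a = x) (hb : γ b = y) :
    intrinsicDist S x y ≤ eVariationOn γ (Icc a b) := by
  set φ : ℝ → ℝ := fun t => (b - a) * t + a
  have hφ : φ '' Icc 0 1 = Icc a b := by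
    simp [φ, image_affine_Icc' (sub_pos.2 hab)]
  have hφmono : MonotoneOn φ (Icc 0 1) := fun s _ t _ hst => by
    dsimp [φ]; nlinarith
  rw [← hφ, ← eVariationOn.comp_eq_of_monotoneOn γ φ hφmono]
  refine intrinsicDist_le_eVariationOn (hγ.comp (by fun_prop) ?_) (hγS.comp ?_) ?_ ?_
  · exact hφ ▸ mapsTo_image φ _
  · exact hφ ▸ mapsTo_image φ _
  · simpa [φ] using ha
  · simpa [φ] using hb

lemma edist_le_intrinsicDist : edist x y ≤ intrinsicDist S x y :=
  le_iInf₂ fun γ ⟨_, _, h0, h1⟩ => h0 ▸ h1 ▸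
    eVariationOn.edist_le γ (left_mem_Icc.2 zero_le_one) (right_mem_Icc.2 zero_le_one)

lemma intrinsicDist_le_eVariationOn_add {γ₁ γ₂ : ℝ → X}
    (hγ₁ : ContinuousOn γ₁ (Icc 0 1) ∧ MapsTo γ₁ (Icc 0 1) S ∧ γ₁ 0 = x ∧ γ₁ 1 = y)
    (hγ₂ : ContinuousOn γ₂ (Icc 0 1) ∧ MapsTo γ₂ (Icc 0 1) S ∧ γ₂ 0 = y ∧ γ₂ 1 = z) :
    intrinsicDist S x z ≤ eVariationOn γ₁ (Icc 0 1) + eVariationOn γ₂ (Icc 0 1) := by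
  obtain ⟨hc₁, hS₁, hx, hy⟩ := hγ₁
  obtain ⟨hc₂, hS₂, hy', hz⟩ := hγ₂
  set γ : ℝ → X := fun t => if t ≤ 0 then γ₁ (t + 1) else γ₂ t
  have hshift : (· + 1) '' Icc (-1 : ℝ) 0 = Icc 0 1 := by norm_num [image_add_const_Icc]
  have hshift_maps : MapsTo (· + 1) (Icc (-1 : ℝ) 0) (Icc 0 1) := hshift ▸ mapsTo_image _ _
  have heq₁ : EqOn γ (γ₁ ∘ (· + 1)) (Icc (-1) 0) := fun t ht => if_pos ht.2
  have heq₂ : EqOn γ γ₂ (Icc 0 1) := fun t ht => by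
    rcases ht.1.eq_or_lt with rfl | hpos
    · simp [γ, hy, hy']
    · exact if_neg hpos.not_ge
  have hcont : ContinuousOn γ (Icc (-1) 1) := by
    rw [← Icc_union_Icc_eq_Icc (by norm_num : (-1 : ℝ) ≤ 0) zero_le_one]
    exact ((hc₁.comp (by fun_prop) hshift_maps).congr heq₁).union_of_isClosed
      (hc₂.congr heq₂) isClosed_Icc isClosed_Icc
  have hmaps : MapsTo γ (Icc (-1) 1) S := fun t ht => by
    by_cases h : t ≤ 0
    · exact heq₁ ⟨ht.1, h⟩ ▸ hS₁ (hshift_maps ⟨ht.1, h⟩)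
    · exact heq₂ ⟨(not_le.1 h).le, ht.2⟩ ▸ hS₂ ⟨(not_le.1 h).le, ht.2⟩
  have hvar : eVariationOn γ (Icc (-1) 1) =
      eVariationOn γ₁ (Icc 0 1) + eVariationOn γ₂ (Icc 0 1) := by
    have hsplit := eVariationOn.Icc_add_Icc γ (s := univ) (by norm_num : (-1 : ℝ) ≤ 0)
      zero_le_one (mem_univ 0)
    simp only [univ_inter] at hsplit
    rw [← hsplit, eVariationOn.eq_of_eqOn heq₁, eVariationOn.eq_of_eqOn heq₂,
      eVariationOn.comp_eq_of_monotoneOn γ₁ _ (fun _ _ _ _ h => by simpa using h), hshift]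
  refine hvar ▸ intrinsicDist_le_eVariationOn_Icc (by norm_num) hcont hmaps ?_ ?_
  · simp [γ, hx]
  · simp [γ, hz]

lemma intrinsicDist_triangle :
    intrinsicDist S x z ≤ intrinsicDist S x y + intrinsicDist S y z := by
  simp only [intrinsicDist, ENNReal.iInf_add, ENNReal.add_iInf]
  exact le_iInf₂ fun γ₂ hγ₂ => le_iInf₂ fun γ₁ hγ₁ => intrinsicDist_le_eVariationOn_add hγ₁ hγ₂

lemma intrinsicDist_le_edist_of_segment_subset {E : Type*} [NormedAddCommGroup E]
    [NormedSpace ℝ E] {S : Set E} {x y : E} (hseg : segment ℝ x y ⊆ S) :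
    intrinsicDist S x y ≤ edist x y := by
  have hγS : MapsTo (AffineMap.lineMap x y) (Icc (0 : ℝ) 1) S := fun t ht =>
    hseg (segment_eq_image_lineMap ℝ x y ▸ mem_image_of_mem _ ht)
  refine (intrinsicDist_le_eVariationOn (AffineMap.lineMap_continuous.continuousOn) hγS
    (AffineMap.lineMap_apply_zero x y) (AffineMap.lineMap_apply_one x y)).trans ?_
  calc eVariationOn (AffineMap.lineMap x y ∘ id) (Icc (0 : ℝ) 1)
      ≤ nndist x y * eVariationOn id (Icc (0 : ℝ) 1) :=
        (lipschitzWith_lineMap x y).lipschitzOnWith.comp_eVariationOn_le (mapsTo_univ _ _)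
    _ = edist x y := by simp

end IntrinsicDist

theorem stmt_4_general {I : Type*} (F : Set (Finset I))
    (hpc : IsPathConnected (cpxCarrier F)) :
    (∀ x ∈ cpxCarrier F, ∀ y ∈ cpxCarrier F, intrinsicDist (cpxCarrier F) x y < ⊤) ∧
    (∀ x ∈ cpxCarrier F, ∀ ε : ℝ, 0 < ε → ∃ δ : ℝ, 0 < δ ∧ ∀ y ∈ cpxCarrier F,
        ‖x - y‖ < δ → intrinsicDist (cpxCarrier F) x y < ENNReal.ofReal ε) ∧
    (∀ x ∈ cpxCarrier F, ∀ ε : ℝ, 0 < ε → ∃ δ : ℝ, 0 < δ ∧ ∀ y ∈ cpxCarrier F,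
        intrinsicDist (cpxCarrier F) x y < ENNReal.ofReal δ → ‖x - y‖ < ε) := by
  set S := cpxCarrier F
  have hloc (x) (hx : x ∈ S) :
      ∀ᶠ y in 𝓝[S] x, intrinsicDist S x y < ⊤ ∧ intrinsicDist S y x < ⊤ :=
    (eventually_segment_subset_cpxCarrier hx).mono fun y hxy =>
      ⟨(intrinsicDist_le_edist_of_segment_subset hxy).trans_lt (edist_lt_top x y),
        (intrinsicDist_le_edist_of_segment_subset (segment_symm ℝ x y ▸ hxy)).trans_lt
          (edist_lt_top y x)⟩
  refine ⟨fun x hx y hy => ?_, fun x hx ε hε => ?_, fun x _ ε hε => ⟨ε, hε, fun y _ h => ?_⟩⟩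
  · exact hpc.isConnected.isPreconnected.induction₂' (fun x y => intrinsicDist S x y < ⊤) hloc
      (fun _ _ _ _ _ _ hxy hyz =>
        intrinsicDist_triangle.trans_lt (ENNReal.add_lt_top.2 ⟨hxy, hyz⟩)) hx hy
  · obtain ⟨δ, hδ, hball⟩ :=
      Metric.mem_nhdsWithin_iff.1 (eventually_segment_subset_cpxCarrier hx)
    refine ⟨min δ ε, lt_min hδ hε, fun y hy hxy => ?_⟩
    rw [← dist_eq_norm, dist_comm] at hxy
    calc intrinsicDist S x y ≤ edist x y :=
          intrinsicDist_le_edist_of_segment_subset (hball ⟨hxy.trans_le (min_le_left _ _), hy⟩)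
      _ < ENNReal.ofReal ε := by
          rw [edist_dist, ENNReal.ofReal_lt_ofReal_iff hε, dist_comm]
          exact hxy.trans_le (min_le_right _ _)
  · rw [← dist_eq_norm, ← ENNReal.ofReal_lt_ofReal_iff hε, ← edist_dist]
    exact edist_le_intrinsicDist.trans_lt h

/-- If `|Σ|` is path-connected (and `Σ` finite-dimensional), then the
intrinsic metric `d_i` on `|Σ|` is finite and induces the same topology as the `ℓ₂`-metric. -/
theorem stmt_4 {I : Type*} [Nonempty I] (n : ℕ) (F : Set (Finset I)) (hF : IsSubcomplex F)
    (hdim : ∀ s ∈ F, s.card ≤ n + 1)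
    (hpc : IsPathConnected (cpxCarrier F)) :
    (∀ x ∈ cpxCarrier F, ∀ y ∈ cpxCarrier F, intrinsicDist (cpxCarrier F) x y < ⊤) ∧
    (∀ x ∈ cpxCarrier F, ∀ ε : ℝ, 0 < ε → ∃ δ : ℝ, 0 < δ ∧ ∀ y ∈ cpxCarrier F,
        ‖x - y‖ < δ → intrinsicDist (cpxCarrier F) x y < ENNReal.ofReal ε) ∧
    (∀ x ∈ cpxCarrier F, ∀ ε : ℝ, 0 < ε → ∃ δ : ℝ, 0 < δ ∧ ∀ y ∈ cpxCarrier F,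
        intrinsicDist (cpxCarrier F) x y < ENNReal.ofReal δ → ‖x - y‖ < ε) :=
  stmt_4_general F hpc
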